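/- Let A be an n×n complex Hermitian matrix (n ≥ 2), not a scalar multiple of the identity, with diagonal entries ordered so that a_{11} ≤ a_{22} ≤ ... ≤ a_{nn}, and eigenvalues λ_1(A) ≤ ... ≤ λ_n(A). Let q_n = Σ_{j≠n} |a_{nj}|² and r_i = Σ_{j≠i} |a_{ij}|. Then Σ_{i=1}^{n−1} λ_i(A) ≤ Σ_{i=1}^{n−1} a_{ii} − q_n / ( a_{nn} − min_i (a_{ii} − r_i) ), where the denominator a_{nn} − min_i (a_{ii} − r_i) is strictly positive. -/

import Mathlib

private lemma aux_entry_re {n : ℕ} (U : Matrix (Fin n) (Fin n) ℂ) (d : Fin n → ℝ) (i : Fin n) :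
    ((U * Matrix.diagonal (fun k => (d k : ℂ)) * star U) i i).re
      = ∑ k, Complex.normSq (U i k) * d k := by
  rw [Matrix.mul_apply]
  simp only [Matrix.mul_diagonal, Matrix.star_apply, Complex.re_sum]
  refine Finset.sum_congr rfl fun k _ => ?_
  rw [mul_comm (U i k) _, mul_assoc]
  simp [Complex.star_def, Complex.mul_conj, mul_comm]

private lemma aux_gersh {n : ℕ} (A : Matrix (Fin n) (Fin n) ℂ) (hA : A.IsHermitian) (k : Fin n) :
    ∃ i : Fin n, (A i i).re - (∑ j ∈ Finset.univ.erase i, ‖A i j‖)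
      ≤ hA.eigenvalues k := by
  have hev : Module.End.HasEigenvalue (Matrix.toLin' A) ((hA.eigenvalues k : ℂ)) := by
    refine Module.End.hasEigenvalue_of_hasEigenvector (x := ⇑(hA.eigenvectorBasis k))
      ⟨?_, fun h => hA.eigenvectorBasis.orthonormal.ne_zero k (by simpa using congrArg (WithLp.toLp 2) h)⟩
    rw [Module.End.mem_eigenspace_iff, Matrix.toLin'_apply, hA.mulVec_eigenvectorBasis k]
    ext j; simp [Complex.real_smul]
  obtain ⟨i, hi⟩ := eigenvalue_mem_ball hev
  refine ⟨i, ?_⟩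
  rw [Metric.mem_closedBall, dist_eq_norm] at hi
  have h2 : |hA.eigenvalues k - (A i i).re| ≤ ‖(hA.eigenvalues k : ℂ) - A i i‖ := by
    have := Complex.abs_re_le_norm ((hA.eigenvalues k : ℂ) - A i i)
    simpa using this
  have h3 : (∑ j ∈ Finset.univ.erase i, ‖A i j‖)
      = ∑ j ∈ Finset.univ.erase i, ‖A i j‖ := rfl
  have := abs_le.mp (h2.trans (hi.trans_eq h3))
  linarith [this.1]

private lemma aux_sq {n : ℕ} (A : Matrix (Fin n) (Fin n) ℂ) (hA : A.IsHermitian) :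
    A * A = (hA.eigenvectorUnitary : Matrix (Fin n) (Fin n) ℂ)
      * Matrix.diagonal (fun k => ((hA.eigenvalues k ^ 2 : ℝ) : ℂ))
      * star (hA.eigenvectorUnitary : Matrix (Fin n) (Fin n) ℂ) := by
  conv_lhs => rw [hA.spectral_theorem, Unitary.conjStarAlgAut_apply]
  set U := (hA.eigenvectorUnitary : Matrix (Fin n) (Fin n) ℂ)
  have h1 : star U * U = 1 := Matrix.mem_unitaryGroup_iff'.mp hA.eigenvectorUnitary.2
  have hdd : (Matrix.diagonal (RCLike.ofReal ∘ hA.eigenvalues) : Matrix (Fin n) (Fin n) ℂ)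
      * Matrix.diagonal (RCLike.ofReal ∘ hA.eigenvalues)
      = Matrix.diagonal (fun k => ((hA.eigenvalues k ^ 2 : ℝ) : ℂ)) := by
    rw [Matrix.diagonal_mul_diagonal]
    ext k j
    by_cases h : k = j <;> simp [h, Function.comp] <;> push_cast <;> ring
  rw [show U * Matrix.diagonal (RCLike.ofReal ∘ hA.eigenvalues) * star U *
      (U * Matrix.diagonal (RCLike.ofReal ∘ hA.eigenvalues) * star U)
      = U * (Matrix.diagonal (RCLike.ofReal ∘ hA.eigenvalues) * (star U * U)
        * Matrix.diagonal (RCLike.ofReal ∘ hA.eigenvalues)) * star U by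
    simp only [Matrix.mul_assoc], h1, Matrix.mul_one, hdd]

private lemma aux_AA {n : ℕ} (A : Matrix (Fin n) (Fin n) ℂ) (hA : A.IsHermitian) (N : Fin n) :
    ((A * A) N N).re = (A N N).re ^ 2 + ∑ j ∈ Finset.univ.erase N, ‖A N j‖ ^ 2 := by
  rw [Matrix.mul_apply]
  have hstep : ∀ j, (A N j * A j N).re = Complex.normSq (A N j) := by
    intro j
    rw [← hA.apply N j, Complex.star_def, mul_comm, Complex.mul_conj]
    simp [Complex.normSq_conj]
  rw [Complex.re_sum]
  rw [Finset.sum_congr rfl (fun j _ => hstep j)]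
  rw [← Finset.add_sum_erase _ _ (Finset.mem_univ N)]
  have him : (A N N).im = 0 := by
    have := hA.coe_re_apply_self N
    rw [Complex.ext_iff] at this
    simpa using this.2.symm
  congr 1
  · rw [Complex.normSq_apply, him]; ring
  · exact Finset.sum_congr rfl fun j _ => (Complex.sq_norm _).symm

/-- For an `n × n` (`n ≥ 2`) complex Hermitian matrix `A`, not a scalar
multiple of the identity, with increasing diagonal and sorted eigenvalues `μ`,
`Σ_{i=1}^{n-1} λᵢ(A) ≤ Σ_{i=1}^{n-1} aᵢᵢ - qₙ / (aₙₙ - minᵢ (aᵢᵢ - rᵢ))`, and the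
denominator is strictly positive. -/
theorem partial_sum_eigenvalues_first_n_minus_one
    {n : ℕ} (hn : 2 ≤ n) (A : Matrix (Fin n) (Fin n) ℂ) (hA : A.IsHermitian)
    (hdiag : Monotone fun i : Fin n => (A i i).re)
    (hns : ¬ ∃ c : ℂ, A = c • (1 : Matrix (Fin n) (Fin n) ℂ))
    (μ : Fin n → ℝ) (hμ : ∃ σ : Equiv.Perm (Fin n), μ = hA.eigenvalues ∘ σ)
    (hmono : Monotone μ)
    (r : Fin n → ℝ)
    (hr : ∀ i, r i = ∑ j ∈ Finset.univ.erase i, ‖A i j‖)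
    (qₙ : ℝ)
    (hq : qₙ = ∑ j ∈ Finset.univ.erase (⟨n - 1, by omega⟩ : Fin n),
      ‖A ⟨n - 1, by omega⟩ j‖ ^ 2)
    (m : ℝ)
    (hm : m = Finset.univ.inf' ⟨(⟨n - 1, by omega⟩ : Fin n), Finset.mem_univ _⟩
      (fun i => (A i i).re - r i)) :
    0 < (A ⟨n - 1, by omega⟩ ⟨n - 1, by omega⟩).re - m ∧
    ∑ i ∈ Finset.univ.filter (fun i : Fin n => (i : ℕ) < n - 1), μ i ≤
      ∑ i ∈ Finset.univ.filter (fun i : Fin n => (i : ℕ) < n - 1), (A i i).re -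
        qₙ / ((A ⟨n - 1, by omega⟩ ⟨n - 1, by omega⟩).re - m) := by
  set N : Fin n := ⟨n - 1, by omega⟩ with hN
  set U : Matrix (Fin n) (Fin n) ℂ := (hA.eigenvectorUnitary : Matrix (Fin n) (Fin n) ℂ) with hU
  set lam : Fin n → ℝ := hA.eigenvalues with hlam
  set a : ℝ := (A N N).re with ha
  set t : ℝ := μ N with ht
  -- topmost index
  have hNtop : ∀ i : Fin n, i ≤ N := by
    intro i
    rw [Fin.le_def]
    have := i.isLt
    simp only [hN]
    omega
  -- the diagonal entries in the eigenbasis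
  have hspec : A = U * Matrix.diagonal (fun k => ((lam k : ℝ) : ℂ)) * star U :=
    hA.spectral_theorem
  have hdiagEig : ∀ i : Fin n, (A i i).re = ∑ k, Complex.normSq (U i k) * lam k := by
    intro i
    conv_lhs => rw [hspec]
    exact aux_entry_re U lam i
  have hAAEig : ((A * A) N N).re = ∑ k, Complex.normSq (U N k) * (lam k ^ 2) := by
    conv_lhs => rw [aux_sq A hA]
    exact aux_entry_re U (fun k => lam k ^ 2) N
  -- unitary row/column sums
  have hrow : ∑ k, Complex.normSq (U N k) = 1 := by
    have h1 : U * star U = 1 := Matrix.mem_unitaryGroup_iff.mp hA.eigenvectorUnitary.2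
    have h2 := congrArg (fun M => (M N N).re) h1
    simpa [Matrix.mul_apply, Matrix.star_apply, Complex.re_sum, Complex.star_def,
      Complex.mul_conj, Matrix.one_apply] using h2
  have hcol : ∀ k, ∑ i, Complex.normSq (U i k) = 1 := by
    intro k
    have h1 : star U * U = 1 := Matrix.mem_unitaryGroup_iff'.mp hA.eigenvectorUnitary.2
    have h2 := congrArg (fun M => (M k k).re) h1
    simpa [Matrix.mul_apply, Matrix.star_apply, Complex.re_sum, Complex.star_def,
      Complex.mul_conj', Matrix.one_apply, Complex.normSq_apply] using h2
  -- Gershgorin lower bound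
  have hlow : ∀ k, m ≤ lam k := by
    intro k
    obtain ⟨i, hi⟩ := aux_gersh A hA k
    have h2 : m ≤ (A i i).re - r i := by
      rw [hm]; exact Finset.inf'_le _ (Finset.mem_univ i)
    rw [hr i] at h2
    exact h2.trans hi
  -- upper bound
  obtain ⟨σ, hσ⟩ := hμ
  have hub : ∀ k, lam k ≤ t := by
    intro k
    have h1 : lam k = μ (σ.symm k) := by
      rw [hσ]; simp [Function.comp]
    rw [h1, ht]
    exact hmono (hNtop _)
  have hsumμ : ∑ i, μ i = ∑ k, lam k := by
    rw [hσ]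
    exact Equiv.sum_comp σ lam
  -- trace identity
  have htrace : ∑ i, (A i i).re = ∑ k, lam k := by
    rw [Finset.sum_congr rfl (fun i _ => hdiagEig i), Finset.sum_comm]
    refine Finset.sum_congr rfl fun k _ => ?_
    rw [← Finset.sum_mul, hcol k, one_mul]
  -- positivity of the denominator
  have hrnonneg : ∀ i, 0 ≤ r i := by
    intro i
    rw [hr i]
    exact Finset.sum_nonneg fun j _ => norm_nonneg _
  have hpos : 0 < a - m := by
    by_contra hcon
    push_neg at hcon
    have ham : a ≤ m := by linarith
    have hkey : ∀ i, a ≤ (A i i).re - r i := by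
      intro i
      refine ham.trans ?_
      rw [hm]; exact Finset.inf'_le _ (Finset.mem_univ i)
    have hdle : ∀ i, (A i i).re ≤ a := fun i => hdiag (hNtop i)
    have hr0 : ∀ i, r i = 0 := by
      intro i
      have := hkey i
      have := hdle i
      have := hrnonneg i
      linarith
    have hdeq : ∀ i, (A i i).re = a := by
      intro i
      have := hkey i
      rw [hr0 i] at this
      have := hdle i
      linarith
    apply hns
    refine ⟨A N N, ?_⟩
    ext i j
    by_cases hij : i = j
    · subst hij
      have h1 : (A i i).im = 0 := by
        have := hA.coe_re_apply_self i
        rw [Complex.ext_iff] at this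
        simpa using this.2.symm
      have h2 : (A N N).im = 0 := by
        have := hA.coe_re_apply_self N
        rw [Complex.ext_iff] at this
        simpa using this.2.symm
      have h3 : (A i i).re = (A N N).re := hdeq i
      simp only [Matrix.smul_apply, Matrix.one_apply_eq, smul_eq_mul, mul_one]
      exact Complex.ext h3 (by rw [h1, h2])
    · have h1 : ‖A i j‖ = 0 := by
        have h2 := hr0 i
        rw [hr i] at h2
        have := (Finset.sum_eq_zero_iff_of_nonneg
          (fun j _ => norm_nonneg (A i j))).mp h2
        exact this j (Finset.mem_erase.mpr ⟨fun h => hij h.symm, Finset.mem_univ j⟩)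
      simp only [Matrix.smul_apply, smul_eq_mul]
      rw [Matrix.one_apply_ne hij, mul_zero]
      exact norm_eq_zero.mp h1
  refine ⟨hpos, ?_⟩
  -- the quadratic inequality
  have hAAdirect : ((A * A) N N).re = a ^ 2 + qₙ := by
    rw [aux_AA A hA N, hq]
  have h1 : a = ∑ k, Complex.normSq (U N k) * lam k := hdiagEig N
  have h2 : a ^ 2 + qₙ = ∑ k, Complex.normSq (U N k) * (lam k ^ 2) := by
    rw [← hAAdirect, hAAEig]
  have h3 : ∑ k, Complex.normSq (U N k) * (lam k ^ 2)
      ≤ ∑ k, Complex.normSq (U N k) * ((t + m) * lam k - t * m) := by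
    refine Finset.sum_le_sum fun k _ => ?_
    refine mul_le_mul_of_nonneg_left ?_ (Complex.normSq_nonneg _)
    nlinarith [mul_nonneg (sub_nonneg.mpr (hlow k)) (sub_nonneg.mpr (hub k))]
  have h4 : ∑ k, Complex.normSq (U N k) * ((t + m) * lam k - t * m)
      = (t + m) * (∑ k, Complex.normSq (U N k) * lam k)
        - t * m * (∑ k, Complex.normSq (U N k)) := by
    rw [Finset.mul_sum, Finset.mul_sum, ← Finset.sum_sub_distrib]
    exact Finset.sum_congr rfl fun k _ => by ring
  have hquad : qₙ ≤ (t - a) * (a - m) := by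
    have h5 : a ^ 2 + qₙ ≤ (t + m) * a - t * m := by
      calc a ^ 2 + qₙ ≤ ∑ k, Complex.normSq (U N k) * ((t + m) * lam k - t * m) :=
            h2 ▸ h3
        _ = (t + m) * a - t * m := by rw [h4, ← h1, hrow, mul_one]
    nlinarith
  have hdiv : qₙ / (a - m) ≤ t - a := (div_le_iff₀ hpos).mpr hquad
  -- sum manipulations
  have hfe : Finset.univ.filter (fun i : Fin n => (i : ℕ) < n - 1)
      = Finset.univ.erase N := by
    ext i
    have hi := i.isLt
    simp only [Finset.mem_filter, Finset.mem_univ, true_and, Finset.mem_erase, and_true,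
      ne_eq, Fin.ext_iff, hN]
    omega
  rw [hfe, Finset.sum_erase_eq_sub (Finset.mem_univ N),
    Finset.sum_erase_eq_sub (Finset.mem_univ N)]
  have hfinal : ∑ i, μ i = ∑ i, (A i i).re := by rw [hsumμ, htrace]
  rw [hfinal]
  have : a + qₙ / (a - m) ≤ t := by linarith
  linarith
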